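/- Let T be a Noetherian regular ring of prime characteristic p, let e ≥ 1, assume T^{1/p^e} is a ∩-flat T-module, and let A, B ⊆ T be ideals. Then Ã^(e) + B is the smallest ideal J of T such that B ⊆ J and A ⊆ J^{[p^e]}. -/

import Mathlib

/-! Restriction of scalars along Frobenius identifies `J • T^{1/p^e}` with `J^{[p^e]}`, and
`J • M` is the image of `M ⊗ J` in `M ⊗ T = M`. Hence ∩-flatness of `T^{1/p^e}` makes
`J ↦ J^{[p^e]}` commute with arbitrary intersections, so `Ã^(e)` itself satisfies
`A ⊆ (Ã^(e))^{[p^e]}`: it is the least such ideal, and adding `B` gives the least `J` with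
both properties. -/

open IsLocalRing

/-- The `q`-th Frobenius power of an ideal: the ideal generated by `q`-th powers of elements. -/
def Ideal.frobPow {R : Type*} [CommSemiring R] (q : ℕ) (I : Ideal R) : Ideal R :=
  Ideal.span ((fun a => a ^ q) '' (I : Set R))

/-- Regularity for a local ring: the maximal ideal is generated by `dim R` elements. -/
def IsRegularLocal (R : Type*) [CommRing R] [IsLocalRing R] : Prop :=
  ∃ (n : ℕ) (x : Fin n → R), maximalIdeal R = Ideal.span (Set.range x) ∧
    ringKrullDim R = n

/-- A regular (commutative Noetherian) ring: every localization at a prime is regular local. -/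
def IsRegularRing' (T : Type*) [CommRing T] : Prop :=
  ∀ (P : Ideal T) [P.IsPrime], IsRegularLocal (Localization.AtPrime P)

/-- `T^{1/p^e}`: the ring `T` viewed as a module over itself by restriction of scalars
along the `e`-th iterate of the Frobenius endomorphism (`t • x = t^{p^e} * x`). -/
def FrobTwist (T : Type*) (p e : ℕ) : Type _ := T

instance FrobTwist.instAddCommGroup {T : Type*} [CommRing T] {p e : ℕ} :
    AddCommGroup (FrobTwist T p e) :=
  inferInstanceAs (AddCommGroup T)

instance FrobTwist.instModule {T : Type*} [CommRing T] {p e : ℕ} [ExpChar T p] :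
    Module T (FrobTwist T p e) :=
  Module.compHom T (iterateFrobenius T p e)

/-- A `∩`-flat module: flat, and tensoring commutes with arbitrary intersections of
submodules of finitely generated modules. -/
def IsInterFlat (T : Type u) [CommRing T] (M : Type v) [AddCommGroup M] [Module T M] : Prop :=
  Module.Flat T M ∧
    ∀ (N : Type u) [AddCommGroup N] [Module T N], Module.Finite T N →
      ∀ 𝒮 : Set (Submodule T N),
        LinearMap.range (LinearMap.lTensor M (sInf 𝒮).subtype) =
          ⨅ P ∈ 𝒮, LinearMap.range (LinearMap.lTensor M (Submodule.subtype P))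

/-- `Ã^{(e)}`: the intersection of all ideals `L` with `A ⊆ L^{[q]}` (`q = p^e`). -/
def Ideal.tilde {T : Type*} [CommSemiring T] (q : ℕ) (A : Ideal T) : Ideal T :=
  sInf { L : Ideal T | A ≤ Ideal.frobPow q L }

open TensorProduct LinearMap in
theorem Submodule.map_range_lTensor_subtype_rid {R M : Type*} [CommRing R] [AddCommGroup M]
    [Module R M] (I : Ideal R) :
    (range (lTensor M I.subtype)).map (TensorProduct.rid R M : M ⊗[R] R →ₗ[R] M) = I • ⊤ := by
  rw [← Submodule.map_range_rTensor_subtype_lid, ← comm_comp_rTensor_comp_comm_eq, range_comp,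
    range_comp_of_range_eq_top _ (LinearEquiv.range _), ← Submodule.map_comp]
  congr 1
  ext
  simp

theorem IsInterFlat.sInf_smul_top {R : Type u} [CommRing R] {M : Type v} [AddCommGroup M]
    [Module R M] (h : IsInterFlat R M) (S : Set (Ideal R)) :
    sInf S • (⊤ : Submodule R M) = ⨅ I ∈ S, I • ⊤ := by
  simp only [← Submodule.map_range_lTensor_subtype_rid, h.2 R (Module.Finite.self R) S,
    Submodule.map_equiv_eq_comap_symm, Submodule.comap_iInf]

theorem Ideal.frobPow_mono {R : Type*} [CommSemiring R] (q : ℕ) :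
    Monotone (Ideal.frobPow (R := R) q) :=
  fun _ _ h => Ideal.span_mono (Set.image_mono h)

def FrobTwist.of {T : Type*} (p e : ℕ) : T ≃ FrobTwist T p e :=
  Equiv.refl T

section FrobTwist

variable {T : Type u} [CommRing T] {p e : ℕ} [ExpChar T p]

theorem FrobTwist.of_mem_smul_top_iff (I : Ideal T) (x : T) :
    FrobTwist.of p e x ∈ I • (⊤ : Submodule T (FrobTwist T p e)) ↔
      x ∈ Ideal.frobPow (p ^ e) I := by
  -- as a `T`-algebra via Frobenius, `I • ⊤` is the extended ideal `I.map Frob^e = I^{[p^e]}`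
  let _ : CommRing (FrobTwist T p e) := inferInstanceAs (CommRing T)
  let _ : Algebra T (FrobTwist T p e) := (iterateFrobenius T p e).toAlgebra
  exact SetLike.ext_iff.mp (Ideal.smul_top_eq_map I) x

theorem Ideal.frobPow_sInf_of_isInterFlat (hflat : IsInterFlat T (FrobTwist T p e))
    (S : Set (Ideal T)) :
    Ideal.frobPow (p ^ e) (sInf S) = ⨅ L ∈ S, Ideal.frobPow (p ^ e) L := by
  ext x
  simp only [← FrobTwist.of_mem_smul_top_iff, hflat.sInf_smul_top, Submodule.mem_iInf]

theorem Ideal.isLeast_tilde (hflat : IsInterFlat T (FrobTwist T p e)) (A : Ideal T) :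
    IsLeast { L : Ideal T | A ≤ Ideal.frobPow (p ^ e) L } (Ideal.tilde (p ^ e) A) := by
  refine ⟨?_, fun _ hL => sInf_le hL⟩
  change A ≤ _
  rw [Ideal.tilde, Ideal.frobPow_sInf_of_isInterFlat hflat]
  exact le_iInf₂ fun _ hL => hL

end FrobTwist

theorem stmt9_general {T : Type u} [CommRing T]
    (p : ℕ) [Fact p.Prime] [CharP T p]
    (e : ℕ) (hflat : IsInterFlat T (FrobTwist T p e))
    (A B : Ideal T) :
    IsLeast { J : Ideal T | B ≤ J ∧ A ≤ Ideal.frobPow (p ^ e) J }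
      (Ideal.tilde (p ^ e) A + B) := by
  obtain ⟨hA, hleast⟩ := Ideal.isLeast_tilde hflat A
  refine ⟨⟨le_sup_right, hA.trans (Ideal.frobPow_mono _ le_sup_left)⟩, ?_⟩
  rintro J ⟨hBJ, hAJ⟩
  exact sup_le (hleast hAJ) hBJ

/-- Let `T` be a Noetherian regular ring of prime characteristic `p`,
`e ≥ 1`, with `T^{1/p^e}` a `∩`-flat `T`-module, and let `A, B ⊆ T` be ideals.  Then
`Ã^{(e)} + B` is the smallest ideal `J` of `T` such that `B ⊆ J` and `A ⊆ J^{[p^e]}`. -/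
theorem stmt9 {T : Type u} [CommRing T] [IsNoetherianRing T]
    (p : ℕ) [Fact p.Prime] [CharP T p] (hreg : IsRegularRing' T)
    (e : ℕ) (he : 1 ≤ e) (hflat : IsInterFlat T (FrobTwist T p e))
    (A B : Ideal T) :
    IsLeast { J : Ideal T | B ≤ J ∧ A ≤ Ideal.frobPow (p ^ e) J }
      (Ideal.tilde (p ^ e) A + B) :=
  stmt9_general p e hflat A B
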